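/- arXiv:1706.05755 — 3 statements merged into one kernel-verified Lean document; each statement's English description precedes it below -/
import Mathlib

section
/- Let (X, M) be a multi-normed vector lattice and e ∈ X₊ nonzero. If for every x ∈ X₊ one has x ∧ ne m-converges to x as n → ∞, then e is strictly positive on the topological dual, i.e., every positive nonzero continuous linear functional f on X satisfies f(e) > 0. -/
/-
The point is that `f e = 0` already forces `f = 0`. For `x ≥ 0`, positivity squeezes
`0 ≤ f (x ⊓ n • e) ≤ n • f e = 0`, so `f (x - x ⊓ n • e) = f x` for every `n`; but
`x - x ⊓ n • e → 0` in every seminorm, hence in the m-topology, and continuity of `f`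
gives `f x = 0`. A linear functional vanishing on `X₊` vanishes on `x = x⁺ - x⁻`.
-/

open Filter Topology

/-- The (locally convex-solid) topology on `X` generated by a family of lattice seminorms. -/
def mTop {X : Type*} [AddCommGroup X] [Lattice X] {Λ : Type*} (m : Λ → X → ℝ) :
    TopologicalSpace X :=
  TopologicalSpace.generateFrom
    {s | ∃ (z : X) (ε : ℝ) (l : Λ), 0 < ε ∧ s = {y : X | m l (y - z) < ε}}

theorem tendsto_mTop_of_tendsto_seminorm {X : Type*} [AddCommGroup X] [Lattice X] {Λ : Type*}
    {m : Λ → X → ℝ} (hadd : ∀ l (x y : X), m l (x + y) ≤ m l x + m l y)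
    {ι : Type*} {F : Filter ι} {y : ι → X} {x : X}
    (hy : ∀ l, Tendsto (fun i => m l (y i - x)) F (𝓝 0)) :
    Tendsto y F (@nhds X (mTop m) x) := by
  rw [mTop, TopologicalSpace.nhds_generateFrom]
  simp only [tendsto_iInf, tendsto_principal]
  rintro _ ⟨hx, z, ε, l, -, rfl⟩
  replace hx : m l (x - z) < ε := hx
  filter_upwards [(hy l).eventually (gt_mem_nhds (sub_pos.2 hx))] with i hi
  calc m l (y i - z) = m l ((y i - x) + (x - z)) := by rw [sub_add_sub_cancel]
    _ ≤ m l (y i - x) + m l (x - z) := hadd l _ _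
    _ < ε := by linarith

theorem LinearMap.eq_zero_of_forall_nonneg_map_eq_zero {R X M : Type*} [Semiring R]
    [AddCommGroup X] [Lattice X] [AddLeftMono X] [AddCommGroup M] [Module R X] [Module R M]
    (f : X →ₗ[R] M) (hf : ∀ x, 0 ≤ x → f x = 0) : f = 0 := by
  ext x
  rw [← posPart_sub_negPart x, map_sub, hf _ (posPart_nonneg x), hf _ (negPart_nonneg x),
    sub_zero, zero_apply]

theorem stmt4_general {X : Type*} [AddCommGroup X] [Lattice X]
    [CovariantClass X X (· + ·) (· ≤ ·)] [Module ℝ X]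
    {Λ : Type*} (m : Λ → X → ℝ)
    (hadd : ∀ l (x y : X), m l (x + y) ≤ m l x + m l y)
    (e : X) (he : 0 ≤ e)
    (hq : ∀ x : X, 0 ≤ x → ∀ l, Tendsto (fun n : ℕ => m l (x - x ⊓ (n • e))) atTop (𝓝 0))
    (f : X →ₗ[ℝ] ℝ) (hfc : @Continuous X ℝ (mTop m) _ f)
    (hfpos : ∀ x : X, 0 ≤ x → 0 ≤ f x) (hfne : f ≠ 0) :
    0 < f e := by
  let := mTop m
  refine (hfpos e he).lt_of_ne fun hfe => hfne <| f.eq_zero_of_forall_nonneg_map_eq_zero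
    fun x hx => ?_
  have hinf : ∀ n : ℕ, f (x ⊓ n • e) = 0 := fun n => by
    have hle := hfpos _ (sub_nonneg.2 (inf_le_right : x ⊓ n • e ≤ n • e))
    rw [map_sub, map_nsmul, ← hfe, smul_zero] at hle
    exact le_antisymm (by linarith) (hfpos _ (le_inf hx (nsmul_nonneg he n)))
  have hlim : Tendsto (fun n : ℕ => f (x - x ⊓ n • e)) atTop (𝓝 0) := by
    rw [← map_zero f]
    exact (hfc.tendsto 0).comp
      (tendsto_mTop_of_tendsto_seminorm hadd fun l => by simpa using hq x hx l)
  simp only [map_sub, hinf, sub_zero] at hlim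
  exact tendsto_nhds_unique tendsto_const_nhds hlim

/-- In an MNVL, if `x ⊓ n e` m-converges to `x` for every `x ∈ X₊`, then `e`
is strictly positive on the topological dual: every positive nonzero m-continuous linear
functional `f` satisfies `f e > 0`. -/
theorem stmt4 {X : Type*} [AddCommGroup X] [Lattice X]
    [CovariantClass X X (· + ·) (· ≤ ·)] [Module ℝ X]
    {Λ : Type*} (m : Λ → X → ℝ)
    (hadd : ∀ l (x y : X), m l (x + y) ≤ m l x + m l y)
    (hsmul : ∀ l (c : ℝ) (x : X), m l (c • x) = |c| * m l x)
    (hmono : ∀ l (x y : X), |x| ≤ |y| → m l x ≤ m l y)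
    (hsep : ∀ x : X, (∀ l, m l x = 0) → x = 0)
    (hdir : ∀ l₁ l₂, ∃ l₃, ∀ x : X, m l₁ x ≤ m l₃ x ∧ m l₂ x ≤ m l₃ x)
    (e : X) (he : 0 ≤ e) (hne : e ≠ 0)
    (hq : ∀ x : X, 0 ≤ x → ∀ l, Tendsto (fun n : ℕ => m l (x - x ⊓ (n • e))) atTop (𝓝 0))
    (f : X →ₗ[ℝ] ℝ) (hfc : @Continuous X ℝ (mTop m) _ f)
    (hfpos : ∀ x : X, 0 ≤ x → 0 ≤ f x) (hfne : f ≠ 0) :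
    0 < f e :=
  stmt4_general m hadd e he hq f hfc hfpos hfne
end

section
/- Let (X, M) be a multi-normed vector lattice. The collection of sets V_{ε,u,λ} = {x ∈ X : m_λ(|x| ∧ u) < ε}, for ε > 0, 0 ≠ u ∈ X₊, λ ∈ Λ, forms a neighborhood base at zero for a Hausdorff locally solid linear topology on X, and a net x_α converges to 0 in this topology if and only if m_λ(|x_α| ∧ u) → 0 for all u ∈ X₊ and all λ ∈ Λ. -/
/-!
The sets `{x | m l (|x| ⊓ u) < ε}` satisfy the axioms of a module filter basis. The gauge
`x ↦ m l (|x| ⊓ u)` is subadditive because `(a + b) ⊓ u ≤ a ⊓ u + b ⊓ u` for `a, b, u ≥ 0`,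
directedness of the seminorms takes care of finite intersections, and
`|c • x| ⊓ u ≤ n • (|x| ⊓ u)` for `|c| ≤ n` gives continuity of scalar multiplication.

That last inequality needs multiplication by positive reals to preserve the order, which the
hypotheses do not say directly: it follows from separation, because the positive cone is closed
for the seminorms (`|z ⊓ 0 - y ⊓ 0| ≤ |z - y|`) and contains every dyadic multiple `(k / 2 ^ j) • x`
of a positive `x` (`2 • y ≥ 0 → y ≥ 0` in a lattice-ordered group). Separation also gives the
Hausdorff property, through `m l (|x| ⊓ |x|) = m l x`.
-/

open Filter Topology
open scoped Pointwise

section LatticeOrderedGroup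

variable {X : Type*} [AddCommGroup X] [Lattice X] [CovariantClass X X (· + ·) (· ≤ ·)]

lemma eq_zero_of_abs_eq_zero {x : X} (h : |x| = 0) : x = 0 :=
  le_antisymm ((le_abs_self x).trans h.le) (neg_nonpos.1 ((neg_le_abs x).trans h.le))

lemma add_inf_le_inf_add_inf {a b u : X} (ha : 0 ≤ a) (hb : 0 ≤ b) (hu : 0 ≤ u) :
    (a + b) ⊓ u ≤ a ⊓ u + b ⊓ u := by
  rw [inf_add, add_inf, add_inf]
  refine le_inf (le_inf inf_le_left ?_) (le_inf ?_ ?_) <;> refine inf_le_right.trans ?_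
  · exact le_add_of_nonneg_left ha
  · exact le_add_of_nonneg_right hb
  · exact le_add_of_nonneg_left hu

lemma nsmul_inf_le_nsmul_inf {a u : X} (ha : 0 ≤ a) (hu : 0 ≤ u) :
    ∀ n : ℕ, (n • a) ⊓ u ≤ n • (a ⊓ u)
  | 0 => by simp [hu]
  | n + 1 => by
    rw [succ_nsmul, succ_nsmul]
    exact (add_inf_le_inf_add_inf (nsmul_nonneg ha n) ha hu).trans
      (add_le_add_left (nsmul_inf_le_nsmul_inf ha hu n) _)

lemma abs_inf_le_abs_inf {v w : X} (hv : 0 ≤ v) (hvw : v ≤ w) (u : X) : |v ⊓ u| ≤ |w ⊓ u| := by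
  refine abs_le'.2 ⟨(inf_le_inf_right u hvw).trans (le_abs_self _), ?_⟩
  rw [neg_le]
  exact le_inf ((neg_nonpos.2 (abs_nonneg _)).trans hv)
    ((neg_le.2 (neg_le_abs (w ⊓ u))).trans inf_le_right)

lemma nonneg_of_two_pow_nsmul_nonneg {y : X} : ∀ j : ℕ, 0 ≤ 2 ^ j • y → 0 ≤ y
  | 0, h => by simpa using h
  | j + 1, h => nsmul_two_semiclosed <|
      nonneg_of_two_pow_nsmul_nonneg j (by rwa [← mul_nsmul, ← pow_succ'])

end LatticeOrderedGroup

structure IsLatticeSeminorm {X : Type*} [AddCommGroup X] [Lattice X] [Module ℝ X]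
    (p : X → ℝ) : Prop where
  add_le : ∀ x y, p (x + y) ≤ p x + p y
  smul : ∀ (c : ℝ) x, p (c • x) = |c| * p x
  mono : ∀ x y, |x| ≤ |y| → p x ≤ p y

namespace IsLatticeSeminorm

variable {X : Type*} [AddCommGroup X] [Lattice X] [Module ℝ X] {p : X → ℝ}

lemma map_zero (hp : IsLatticeSeminorm p) : p 0 = 0 := by
  simpa using hp.smul 0 0

lemma map_neg (hp : IsLatticeSeminorm p) (x : X) : p (-x) = p x := by
  simpa using hp.smul (-1) x

lemma nonneg (hp : IsLatticeSeminorm p) (x : X) : 0 ≤ p x := by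
  have h := hp.add_le x (-x)
  rw [add_neg_cancel, hp.map_zero, hp.map_neg] at h
  linarith

variable [CovariantClass X X (· + ·) (· ≤ ·)]

lemma map_abs (hp : IsLatticeSeminorm p) (x : X) : p |x| = p x :=
  le_antisymm (hp.mono _ _ (abs_abs x).le) (hp.mono _ _ (abs_abs x).ge)

lemma mono_of_nonneg (hp : IsLatticeSeminorm p) {x y : X} (hx : 0 ≤ x) (hxy : x ≤ y) :
    p x ≤ p y :=
  hp.mono _ _ (by rwa [abs_of_nonneg hx, abs_of_nonneg (hx.trans hxy)])

end IsLatticeSeminorm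

section Positivity

variable {X : Type*} [AddCommGroup X] [Lattice X] [Module ℝ X]

lemma abs_smul_le [PosSMulMono ℝ X] (c : ℝ) (x : X) : |c • x| ≤ |c| • |x| := by
  rcases le_total 0 c with hc | hc
  · rw [abs_of_nonneg hc]
    refine abs_le'.2 ⟨smul_le_smul_of_nonneg_left (le_abs_self x) hc, ?_⟩
    rw [← smul_neg]
    exact smul_le_smul_of_nonneg_left (neg_le_abs x) hc
  · rw [abs_of_nonpos hc]
    refine abs_le'.2 ⟨?_, ?_⟩
    · rw [← neg_smul_neg]
      exact smul_le_smul_of_nonneg_left (neg_le_abs x) (neg_nonneg.2 hc)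
    · rw [← neg_smul]
      exact smul_le_smul_of_nonneg_left (le_abs_self x) (neg_nonneg.2 hc)

variable [CovariantClass X X (· + ·) (· ≤ ·)] {Λ : Type*} {m : Λ → X → ℝ}

lemma nonneg_of_forall_exists_nonneg_near (hm : ∀ l, IsLatticeSeminorm (m l))
    (hsep : ∀ x : X, (∀ l, m l x = 0) → x = 0) {z : X}
    (h : ∀ l, ∀ ε > 0, ∃ y, 0 ≤ y ∧ m l (z - y) ≤ ε) : 0 ≤ z := by
  refine inf_eq_right.1 (hsep _ fun l => le_antisymm ?_ ((hm l).nonneg _))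
  refine le_of_forall_pos_le_add fun ε hε => ?_
  obtain ⟨y, hy, hzy⟩ := h l ε hε
  have hclose : |z ⊓ 0 - y ⊓ 0| ≤ |z - y| := abs_inf_sub_inf_le_abs z y 0
  rw [inf_eq_right.2 hy, sub_zero] at hclose
  linarith [(hm l).mono _ _ hclose]

lemma dyadic_smul_nonneg {x : X} (hx : 0 ≤ x) (k j : ℕ) : 0 ≤ ((k : ℝ) / 2 ^ j) • x := by
  refine nonneg_of_two_pow_nsmul_nonneg j ?_
  rw [← Nat.cast_smul_eq_nsmul ℝ, smul_smul]
  push_cast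
  rw [mul_div_cancel₀ _ (by positivity), Nat.cast_smul_eq_nsmul]
  exact nsmul_nonneg hx k

lemma abs_sub_nat_floor_div_two_pow_le {c : ℝ} (hc : 0 ≤ c) (j : ℕ) :
    |c - ⌊c * 2 ^ j⌋₊ / 2 ^ j| ≤ 1 / 2 ^ j := by
  have h2 : (0 : ℝ) < 2 ^ j := by positivity
  have hle : (⌊c * 2 ^ j⌋₊ : ℝ) ≤ c * 2 ^ j := Nat.floor_le (by positivity)
  have hlt : c * 2 ^ j < ⌊c * 2 ^ j⌋₊ + 1 := Nat.lt_floor_add_one _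
  have hsplit : c - ⌊c * 2 ^ j⌋₊ / 2 ^ j = (c * 2 ^ j - ⌊c * 2 ^ j⌋₊) / 2 ^ j := by
    field_simp
  rw [hsplit, abs_div, abs_of_pos h2, div_le_div_iff_of_pos_right h2, abs_le]
  constructor <;> linarith

lemma posSMulMono_of_separating (hm : ∀ l, IsLatticeSeminorm (m l))
    (hsep : ∀ x : X, (∀ l, m l x = 0) → x = 0) : PosSMulMono ℝ X := by
  suffices h : ∀ c : ℝ, 0 ≤ c → ∀ x : X, 0 ≤ x → 0 ≤ c • x from
    ⟨fun c hc a b hab => by simpa [smul_sub] using h c hc (b - a) (sub_nonneg.2 hab)⟩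
  intro c hc x hx
  refine nonneg_of_forall_exists_nonneg_near hm hsep fun l ε hε => ?_
  obtain ⟨j, hj⟩ := pow_unbounded_of_one_lt (m l x / ε) one_lt_two
  refine ⟨_, dyadic_smul_nonneg hx ⌊c * 2 ^ j⌋₊ j, ?_⟩
  rw [← sub_smul, (hm l).smul]
  calc |c - ⌊c * 2 ^ j⌋₊ / 2 ^ j| * m l x ≤ 1 / 2 ^ j * m l x :=
        mul_le_mul_of_nonneg_right (abs_sub_nat_floor_div_two_pow_le hc j) ((hm l).nonneg x)
    _ ≤ ε := by
        rw [div_lt_iff₀ hε] at hj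
        rw [one_div_mul_eq_div, div_le_iff₀ (by positivity)]
        linarith

end Positivity

section UmTopology

variable {X : Type*} [AddCommGroup X] [Lattice X] [CovariantClass X X (· + ·) (· ≤ ·)]
  [Module ℝ X]

def umGauge (p : X → ℝ) (u x : X) : ℝ := p (|x| ⊓ u)

variable {p : X → ℝ} {u : X}

lemma umGauge_mono (hp : IsLatticeSeminorm p) {y z : X} (h : |y| ≤ |z|) :
    umGauge p u y ≤ umGauge p u z :=
  hp.mono _ _ (abs_inf_le_abs_inf (abs_nonneg y) h u)

lemma umGauge_zero (hp : IsLatticeSeminorm p) (hu : 0 ≤ u) : umGauge p u 0 = 0 := by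
  rw [umGauge, abs_zero, inf_eq_left.2 hu, hp.map_zero]

lemma umGauge_add_le (hp : IsLatticeSeminorm p) (hu : 0 ≤ u) (x y : X) :
    umGauge p u (x + y) ≤ umGauge p u x + umGauge p u y :=
  (hp.mono_of_nonneg (le_inf (abs_nonneg _) hu) ((inf_le_inf_right u (abs_add_le x y)).trans
    (add_inf_le_inf_add_inf (abs_nonneg x) (abs_nonneg y) hu))).trans (hp.add_le _ _)

lemma umGauge_le (hp : IsLatticeSeminorm p) (hu : 0 ≤ u) (x : X) : umGauge p u x ≤ p x :=
  (hp.mono_of_nonneg (le_inf (abs_nonneg _) hu) inf_le_left).trans (hp.map_abs x).le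

lemma umGauge_le_of_le (hp : IsLatticeSeminorm p) (hu : 0 ≤ u) {v : X} (huv : u ≤ v) (x : X) :
    umGauge p u x ≤ umGauge p v x :=
  hp.mono_of_nonneg (le_inf (abs_nonneg _) hu) (inf_le_inf_left _ huv)

lemma umGauge_abs_self (hp : IsLatticeSeminorm p) (x : X) : umGauge p |x| x = p x := by
  rw [umGauge, inf_idem, hp.map_abs]

lemma umGauge_smul_le [PosSMulMono ℝ X] (hp : IsLatticeSeminorm p) (hu : 0 ≤ u) {c : ℝ} {n : ℕ}
    (hc : |c| ≤ n) (x : X) : umGauge p u (c • x) ≤ n * umGauge p u x := by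
  have habs : |c • x| ≤ n • |x| := calc
    |c • x| ≤ |c| • |x| := abs_smul_le c x
    _ ≤ (n : ℝ) • |x| := by
      simpa [sub_smul] using smul_nonneg (sub_nonneg.2 hc) (abs_nonneg x)
    _ = n • |x| := Nat.cast_smul_eq_nsmul ℝ n |x|
  calc umGauge p u (c • x) ≤ p (n • (|x| ⊓ u)) :=
        hp.mono_of_nonneg (le_inf (abs_nonneg _) hu)
          ((inf_le_inf_right u habs).trans (nsmul_inf_le_nsmul_inf (abs_nonneg x) hu n))
    _ = n * umGauge p u x := by
        rw [← Nat.cast_smul_eq_nsmul ℝ, hp.smul, abs_of_nonneg (Nat.cast_nonneg n), umGauge]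

variable {Λ : Type*} {m : Λ → X → ℝ}

variable (m) in
/-- `umNhd m (ε, u, l)` is the paper's `V_{ε,u,λ}`. -/
def umNhd (i : ℝ × X × Λ) : Set X := {x | umGauge (m i.2.2) i.2.1 x < i.1}

def IsUmIndex (i : ℝ × X × Λ) : Prop := 0 < i.1 ∧ 0 ≤ i.2.1 ∧ i.2.1 ≠ 0

lemma zero_mem_umNhd (hm : ∀ l, IsLatticeSeminorm (m l)) {i : ℝ × X × Λ} (hi : IsUmIndex i) :
    (0 : X) ∈ umNhd m i := by
  simpa [umNhd, umGauge_zero (hm _) hi.2.1] using hi.1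

lemma exists_umNhd_subset_inter (hm : ∀ l, IsLatticeSeminorm (m l)) (hdir : Directed (· ≤ ·) m)
    {i j : ℝ × X × Λ} (hi : IsUmIndex i) (hj : IsUmIndex j) :
    ∃ k, IsUmIndex k ∧ umNhd m k ⊆ umNhd m i ∩ umNhd m j := by
  obtain ⟨ε₁, u₁, l₁⟩ := i
  obtain ⟨ε₂, u₂, l₂⟩ := j
  obtain ⟨l₃, hl₁, hl₂⟩ := hdir l₁ l₂
  have hu : 0 ≤ u₁ ⊔ u₂ := hi.2.1.trans le_sup_left
  refine ⟨(min ε₁ ε₂, u₁ ⊔ u₂, l₃), ⟨lt_min hi.1 hj.1, hu, ?_⟩, fun x hx => ⟨?_, ?_⟩⟩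
  · exact fun h => hi.2.2 (le_antisymm (h ▸ le_sup_left) hi.2.1)
  · calc umGauge (m l₁) u₁ x ≤ umGauge (m l₃) (u₁ ⊔ u₂) x :=
          (hl₁ _).trans (umGauge_le_of_le (hm l₃) hi.2.1 le_sup_left x)
      _ < ε₁ := hx.trans_le (min_le_left _ _)
  · calc umGauge (m l₂) u₂ x ≤ umGauge (m l₃) (u₁ ⊔ u₂) x :=
          (hl₂ _).trans (umGauge_le_of_le (hm l₃) hj.2.1 le_sup_right x)
      _ < ε₂ := hx.trans_le (min_le_right _ _)

lemma umNhd_half_add_subset (hm : ∀ l, IsLatticeSeminorm (m l)) {ε : ℝ} {u : X} (hu : 0 ≤ u)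
    (l : Λ) : umNhd m (ε / 2, u, l) + umNhd m (ε / 2, u, l) ⊆ umNhd m (ε, u, l) := by
  rintro _ ⟨x, hx, y, hy, rfl⟩
  have hxy := umGauge_add_le (hm l) hu x y
  simp only [umNhd, Set.mem_ofPred_eq] at hx hy ⊢
  linarith

lemma umNhd_subset_neg_preimage (hm : ∀ l, IsLatticeSeminorm (m l)) (i : ℝ × X × Λ) :
    umNhd m i ⊆ (fun x => -x) ⁻¹' umNhd m i :=
  fun x hx => (umGauge_mono (hm _) (abs_neg x).le).trans_lt hx

lemma eventually_smul_mem_umNhd (hm : ∀ l, IsLatticeSeminorm (m l)) (x : X)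
    {i : ℝ × X × Λ} (hi : IsUmIndex i) : ∀ᶠ c in 𝓝 (0 : ℝ), c • x ∈ umNhd m i := by
  obtain ⟨ε, u, l⟩ := i
  have hlim : Tendsto (fun c : ℝ => |c| * m l x) (𝓝 0) (𝓝 0) :=
    (by fun_prop : Continuous fun c : ℝ => |c| * m l x).tendsto' 0 0 (by simp)
  filter_upwards [hlim.eventually (gt_mem_nhds hi.1)] with c hc
  exact (umGauge_le (hm l) hi.2.1 _).trans_lt (by rwa [(hm l).smul])

lemma t2Space_of_hasBasis_umNhd [TopologicalSpace X] [IsTopologicalAddGroup X]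
    (hm : ∀ l, IsLatticeSeminorm (m l)) (hsep : ∀ x : X, (∀ l, m l x = 0) → x = 0)
    (h : (𝓝 (0 : X)).HasBasis IsUmIndex (umNhd m)) : T2Space X := by
  refine IsTopologicalAddGroup.t2Space_of_zero_sep fun x hx => ?_
  obtain ⟨l, hl⟩ : ∃ l, m l x ≠ 0 := by
    by_contra! h0
    exact hx (hsep x h0)
  have hpos : 0 < m l x := ((hm l).nonneg x).lt_of_ne' hl
  have habs : |x| ≠ 0 := fun h0 => hx (eq_zero_of_abs_eq_zero h0)
  refine ⟨_, h.mem_of_mem (i := (m l x, |x|, l)) ⟨hpos, abs_nonneg x, habs⟩, fun hmem => ?_⟩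
  exact (lt_irrefl _) ((umGauge_abs_self (hm l) x).symm.trans_lt hmem)

lemma tendsto_nhds_zero_iff_of_hasBasis_umNhd [TopologicalSpace X]
    (hm : ∀ l, IsLatticeSeminorm (m l)) (h : (𝓝 (0 : X)).HasBasis IsUmIndex (umNhd m))
    {α : Type*} (F : Filter α) (x : α → X) :
    Tendsto x F (𝓝 0) ↔
      ∀ u : X, 0 ≤ u → ∀ l, Tendsto (fun a => umGauge (m l) u (x a)) F (𝓝 0) := by
  rw [h.tendsto_right_iff]
  constructor
  · intro hx u hu l
    rcases eq_or_ne u 0 with rfl | hu0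
    · simpa [umGauge, abs_nonneg, (hm l).map_zero] using tendsto_const_nhds
    · refine tendsto_order.2 ⟨fun ε hε => Eventually.of_forall fun a => ?_, fun ε hε => ?_⟩
      · exact hε.trans_le ((hm l).nonneg _)
      · exact hx (ε, u, l) ⟨hε, hu, hu0⟩
  · rintro hx ⟨ε, u, l⟩ ⟨hε, hu, -⟩
    exact (hx u hu l).eventually (gt_mem_nhds hε)

variable [PosSMulMono ℝ X]

lemma ball_smul_umNhd_subset (hm : ∀ l, IsLatticeSeminorm (m l)) {i : ℝ × X × Λ}
    (hi : IsUmIndex i) : Metric.ball (0 : ℝ) 1 • umNhd m i ⊆ umNhd m i := by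
  rintro _ ⟨c, hc, x, hx, rfl⟩
  have hc1 : |c| ≤ ((1 : ℕ) : ℝ) := by
    simpa [Real.dist_eq] using (Metric.mem_ball.1 hc).le
  have h := umGauge_smul_le (hm i.2.2) hi.2.1 hc1 x
  rw [Nat.cast_one, one_mul] at h
  exact h.trans_lt hx

lemma exists_mapsTo_smul_umNhd (hm : ∀ l, IsLatticeSeminorm (m l)) (c : ℝ)
    {i : ℝ × X × Λ} (hi : IsUmIndex i) :
    ∃ j, IsUmIndex j ∧ Set.MapsTo (c • ·) (umNhd m j) (umNhd m i) := by
  obtain ⟨ε, u, l⟩ := i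
  obtain ⟨n, hn⟩ := exists_nat_gt |c|
  have hn0 : (0 : ℝ) < n := (abs_nonneg c).trans_lt hn
  refine ⟨(ε / n, u, l), ⟨div_pos hi.1 hn0, hi.2⟩, fun x hx => ?_⟩
  calc umGauge (m l) u (c • x) ≤ n * umGauge (m l) u x := umGauge_smul_le (hm l) hi.2.1 hn.le x
    _ < n * (ε / n) := mul_lt_mul_of_pos_left hx hn0
    _ = ε := mul_div_cancel₀ ε hn0.ne'

variable [Nonempty Λ] [Nontrivial X]

def umModuleFilterBasis (hm : ∀ l, IsLatticeSeminorm (m l)) (hdir : Directed (· ≤ ·) m) :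
    ModuleFilterBasis ℝ X where
  sets := umNhd m '' {i | IsUmIndex i}
  nonempty := by
    obtain ⟨x, hx⟩ := exists_ne (0 : X)
    obtain ⟨l⟩ := ‹Nonempty Λ›
    exact ⟨_, (1, |x|, l), ⟨one_pos, abs_nonneg x, fun h => hx (eq_zero_of_abs_eq_zero h)⟩, rfl⟩
  inter_sets := by
    rintro _ _ ⟨i, hi, rfl⟩ ⟨j, hj, rfl⟩
    obtain ⟨k, hk, hsub⟩ := exists_umNhd_subset_inter hm hdir hi hj
    exact ⟨_, ⟨k, hk, rfl⟩, hsub⟩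
  zero' := by
    rintro _ ⟨i, hi, rfl⟩
    exact zero_mem_umNhd hm hi
  add' := by
    rintro _ ⟨⟨ε, u, l⟩, hi, rfl⟩
    exact ⟨_, ⟨(ε / 2, u, l), ⟨half_pos hi.1, hi.2⟩, rfl⟩, umNhd_half_add_subset hm hi.2.1 l⟩
  neg' := by
    rintro _ ⟨i, hi, rfl⟩
    exact ⟨_, ⟨i, hi, rfl⟩, umNhd_subset_neg_preimage hm i⟩
  conj' := by
    rintro x₀ _ ⟨i, hi, rfl⟩
    exact ⟨_, ⟨i, hi, rfl⟩, fun x hx => by simpa using hx⟩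
  smul' := by
    rintro _ ⟨i, hi, rfl⟩
    exact ⟨_, Metric.ball_mem_nhds 0 one_pos, _, ⟨i, hi, rfl⟩, ball_smul_umNhd_subset hm hi⟩
  smul_left' := by
    rintro c _ ⟨i, hi, rfl⟩
    obtain ⟨j, hj, hmaps⟩ := exists_mapsTo_smul_umNhd hm c hi
    exact ⟨_, ⟨j, hj, rfl⟩, hmaps⟩
  smul_right' := by
    rintro x _ ⟨i, hi, rfl⟩
    exact eventually_smul_mem_umNhd hm x hi

lemma umModuleFilterBasis_nhds_zero_hasBasis (hm : ∀ l, IsLatticeSeminorm (m l))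
    (hdir : Directed (· ≤ ·) m) :
    (@nhds X (umModuleFilterBasis hm hdir).topology 0).HasBasis IsUmIndex (umNhd m) :=
  (umModuleFilterBasis hm hdir).nhds_zero_hasBasis.to_hasBasis
    (fun _ ⟨i, hi, hV⟩ => ⟨i, hi, hV.le⟩) fun i hi => ⟨_, ⟨i, hi, rfl⟩, le_rfl⟩

end UmTopology

/-- In an MNVL `(X, M)`, the sets `V_{ε,u,l} = {x : m l (|x| ⊓ u) < ε}`
(`ε > 0`, `0 ≠ u ∈ X₊`, `l ∈ Λ`) form a neighborhood base at zero of a Hausdorff locally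
solid linear topology (the um-topology), and convergence to `0` in it is exactly
um-convergence: `m l (|x_α| ⊓ u) → 0` for all `u ∈ X₊` and all `l`. -/
theorem stmt5 {X : Type*} [AddCommGroup X] [Lattice X]
    [CovariantClass X X (· + ·) (· ≤ ·)] [Module ℝ X]
    {Λ : Type*} [Nonempty Λ] [Nontrivial X] (m : Λ → X → ℝ)
    (hadd : ∀ l (x y : X), m l (x + y) ≤ m l x + m l y)
    (hsmul : ∀ l (c : ℝ) (x : X), m l (c • x) = |c| * m l x)
    (hmono : ∀ l (x y : X), |x| ≤ |y| → m l x ≤ m l y)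
    (hsep : ∀ x : X, (∀ l, m l x = 0) → x = 0)
    (hdir : ∀ l₁ l₂, ∃ l₃, ∀ x : X, m l₁ x ≤ m l₃ x ∧ m l₂ x ≤ m l₃ x) :
    ∃ τ : TopologicalSpace X,
      @T2Space X τ ∧
      @IsTopologicalAddGroup X τ _ ∧
      @ContinuousSMul ℝ X _ _ τ ∧
      -- the sets V_{ε,u,l} form a neighborhood base at zero
      (@nhds X τ 0).HasBasis
        (fun p : ℝ × X × Λ => 0 < p.1 ∧ 0 ≤ p.2.1 ∧ p.2.1 ≠ 0)
        (fun p => {x : X | m p.2.2 (|x| ⊓ p.2.1) < p.1}) ∧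
      -- each basic neighborhood of zero is solid
      (∀ (ε : ℝ) (u : X) (l : Λ) (y z : X),
          |y| ≤ |z| → m l (|z| ⊓ u) < ε → m l (|y| ⊓ u) < ε) ∧
      -- convergence to 0 in τ is exactly um-convergence
      (∀ {α : Type*} (F : Filter α) (x : α → X),
          Tendsto x F (@nhds X τ 0) ↔
            ∀ u : X, 0 ≤ u → ∀ l, Tendsto (fun a => m l (|x a| ⊓ u)) F (𝓝 0)) := by
  have hm : ∀ l, IsLatticeSeminorm (m l) := fun l => ⟨hadd l, hsmul l, hmono l⟩
  have hdir' : Directed (· ≤ ·) m := fun l₁ l₂ =>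
    (hdir l₁ l₂).imp fun _ h => ⟨fun x => (h x).1, fun x => (h x).2⟩
  have := posSMulMono_of_separating hm hsep
  let B := umModuleFilterBasis hm hdir'
  let := B.topology
  have hgrp := B.toAddGroupFilterBasis.isTopologicalAddGroup
  have hbasis := umModuleFilterBasis_nhds_zero_hasBasis hm hdir'
  exact ⟨B.topology, t2Space_of_hasBasis_umNhd hm hsep hbasis, hgrp, B.continuousSMul, hbasis,
    fun ε u l y z hyz hz => (umGauge_mono (hm l) hyz).trans_lt hz,
    tendsto_nhds_zero_iff_of_hasBasis_umNhd hm hbasis⟩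
end

section
/- Let (X, M) be a multi-normed vector lattice in which every m-bounded um-closed subset is um-compact. Then X has the Levi property: every increasing m-bounded net in X₊ has a supremum in X. -/
open Filter Topology

/-- The um-topology generated by a family of lattice seminorms. -/
def umTop {X : Type*} [AddCommGroup X] [Lattice X] {Λ : Type*} (m : Λ → X → ℝ) :
    TopologicalSpace X :=
  TopologicalSpace.generateFrom
    {s | ∃ (z : X) (ε : ℝ) (l : Λ) (u : X), 0 < ε ∧ 0 ≤ u ∧
          s = {y : X | m l (|y - z| ⊓ u) < ε}}

/-!
The um-closure `C` of the range of the net is still m-bounded, hence um-compact, so the net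
has a um-cluster point `s ∈ C`. The basic um-neighbourhood `{y | m (|y - s| ⊓ v) < m v}` of `s`
meets every tail of the net; hence an element `v ≥ 0` lying eventually below `|x a - s|` has
`m v < m v` for every seminorm with `m v > 0`, and must vanish because the seminorms separate
points. Applied to `v = (x b - s)⁺` (monotonicity) and to `v = (s - b)⁺` for an upper bound `b`,
this shows that `s` is the supremum.
-/

def IsMBounded {X : Type*} {Λ : Type*} (m : Λ → X → ℝ) (A : Set X) : Prop :=
  ∀ l, ∃ M : ℝ, ∀ a ∈ A, m l a ≤ M

section LatticeSeminorm

variable {X : Type*} [AddCommGroup X] {Λ : Type*} {m : Λ → X → ℝ}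

section Module

variable [Module ℝ X]

lemma seminorm_zero (hsmul : ∀ l (c : ℝ) (x : X), m l (c • x) = |c| * m l x) (l : Λ) :
    m l 0 = 0 := by
  simpa using hsmul l 0 0

lemma seminorm_neg (hsmul : ∀ l (c : ℝ) (x : X), m l (c • x) = |c| * m l x) (l : Λ) (x : X) :
    m l (-x) = m l x := by
  simpa using hsmul l (-1) x

lemma seminorm_nonneg (hadd : ∀ l (x y : X), m l (x + y) ≤ m l x + m l y)
    (hsmul : ∀ l (c : ℝ) (x : X), m l (c • x) = |c| * m l x) (l : Λ) (x : X) :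
    0 ≤ m l x := by
  have := hadd l x (-x)
  rw [add_neg_cancel, seminorm_zero hsmul, seminorm_neg hsmul] at this
  linarith

end Module

lemma seminorm_abs [Lattice X] [CovariantClass X X (· + ·) (· ≤ ·)]
    (hmono : ∀ l (x y : X), |x| ≤ |y| → m l x ≤ m l y) (l : Λ) (x : X) :
    m l |x| = m l x :=
  le_antisymm (hmono l _ _ (abs_abs x).le) (hmono l _ _ (abs_abs x).ge)

end LatticeSeminorm

namespace umTop

variable {X : Type*} [AddCommGroup X] [Lattice X] {Λ : Type*} {m : Λ → X → ℝ}

lemma isOpen_ball (z : X) {ε : ℝ} (l : Λ) {u : X} (hε : 0 < ε) (hu : 0 ≤ u) :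
    IsOpen[umTop m] {y | m l (|y - z| ⊓ u) < ε} :=
  TopologicalSpace.isOpen_generateFrom_of_mem ⟨z, ε, l, u, hε, hu, rfl⟩

variable [CovariantClass X X (· + ·) (· ≤ ·)] [Module ℝ X]

lemma ball_mem_nhds (hsmul : ∀ l (c : ℝ) (x : X), m l (c • x) = |c| * m l x)
    (z : X) {ε : ℝ} (l : Λ) {u : X} (hε : 0 < ε) (hu : 0 ≤ u) :
    {y | m l (|y - z| ⊓ u) < ε} ∈ @nhds X (umTop m) z := by
  refine @IsOpen.mem_nhds X (umTop m) _ _ (isOpen_ball z l hε hu) ?_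
  simpa [inf_eq_left.mpr hu, seminorm_zero hsmul] using hε

-- Test closeness to `y` against `u = |y|`: then `|y| ≤ (|a - y| ⊓ |y|) + |a|`.
lemma seminorm_le_of_mem_closure
    (hadd : ∀ l (x y : X), m l (x + y) ≤ m l x + m l y)
    (hsmul : ∀ l (c : ℝ) (x : X), m l (c • x) = |c| * m l x)
    (hmono : ∀ l (x y : X), |x| ≤ |y| → m l x ≤ m l y)
    {A : Set X} {l : Λ} {M : ℝ} (hA : ∀ a ∈ A, m l a ≤ M) {y : X}
    (hy : y ∈ closure[umTop m] A) :
    m l y ≤ M + 1 := by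
  obtain ⟨a, ha, haA⟩ := @mem_closure_iff_nhds X (umTop m) _ _ |>.mp hy _
    (ball_mem_nhds hsmul y l one_pos (abs_nonneg y))
  have hy_le : |y| ≤ |a - y| ⊓ |y| + |a| := by
    rw [← sub_le_iff_le_add]
    refine le_inf ?_ (sub_le_self _ (abs_nonneg a))
    rw [abs_sub_comm]
    exact (le_abs_self _).trans (abs_abs_sub_abs_le y a)
  calc m l y ≤ m l (|a - y| ⊓ |y| + |a|) := hmono l _ _ (hy_le.trans (le_abs_self _))
    _ ≤ m l (|a - y| ⊓ |y|) + m l |a| := hadd l _ _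
    _ ≤ M + 1 := by
      have : m l (|a - y| ⊓ |y|) < 1 := ha
      linarith [seminorm_abs hmono l a, hA a haA]

lemma isMBounded_closure
    (hadd : ∀ l (x y : X), m l (x + y) ≤ m l x + m l y)
    (hsmul : ∀ l (c : ℝ) (x : X), m l (c • x) = |c| * m l x)
    (hmono : ∀ l (x y : X), |x| ≤ |y| → m l x ≤ m l y)
    {A : Set X} (hA : IsMBounded m A) : IsMBounded m (closure[umTop m] A) := fun l ↦
  let ⟨M, hM⟩ := hA l
  ⟨M + 1, fun _ hy ↦ seminorm_le_of_mem_closure hadd hsmul hmono hM hy⟩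

lemma eq_zero_of_clusterPt_of_eventually_le_abs_sub
    (hadd : ∀ l (x y : X), m l (x + y) ≤ m l x + m l y)
    (hsmul : ∀ l (c : ℝ) (x : X), m l (c • x) = |c| * m l x)
    (hsep : ∀ x : X, (∀ l, m l x = 0) → x = 0)
    {F : Filter X} {s v : X} (hs : @ClusterPt X (umTop m) s F) (hv : 0 ≤ v)
    (hle : ∀ᶠ y in F, v ≤ |y - s|) : v = 0 := by
  refine hsep v fun l ↦ (seminorm_nonneg hadd hsmul l v).eq_or_lt.elim Eq.symm fun hpos ↦ ?_
  obtain ⟨y, hy_ball, hy_le⟩ :=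
    ((@ClusterPt.frequently X (umTop m) _ _ _ hs (ball_mem_nhds hsmul s l hpos hv)).and_eventually
      hle).exists
  have : m l (|y - s| ⊓ v) < m l v := hy_ball
  rw [inf_eq_right.mpr hy_le] at this
  exact absurd this (lt_irrefl _)

lemma isLUB_of_clusterPt
    (hadd : ∀ l (x y : X), m l (x + y) ≤ m l x + m l y)
    (hsmul : ∀ l (c : ℝ) (x : X), m l (c • x) = |c| * m l x)
    (hsep : ∀ x : X, (∀ l, m l x = 0) → x = 0)
    {α : Type*} [Preorder α] {x : α → X} (hx : Monotone x) {s : X}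
    (hs : @ClusterPt X (umTop m) s (map x atTop)) : IsLUB (Set.range x) s := by
  have nonpos_of_eventually_le {a : X} (h : ∀ᶠ c in atTop, a ≤ |x c - s|) : a ≤ 0 :=
    posPart_eq_zero.mp <| eq_zero_of_clusterPt_of_eventually_le_abs_sub hadd hsmul hsep hs
      (posPart_nonneg a) (h.mono fun _ hc ↦ sup_le hc (abs_nonneg _))
  refine ⟨Set.forall_mem_range.mpr fun b ↦ sub_nonpos.mp (nonpos_of_eventually_le ?_),
    fun b hb ↦ sub_nonpos.mp (nonpos_of_eventually_le (.of_forall fun c ↦ ?_))⟩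
  · exact (eventually_ge_atTop b).mono fun c hbc ↦
      (sub_le_sub_right (hx hbc) s).trans (le_abs_self _)
  · calc s - b ≤ s - x c := sub_le_sub_left (hb ⟨c, rfl⟩) s
      _ ≤ |x c - s| := (le_abs_self _).trans (abs_sub_comm _ _).le

end umTop

theorem stmt19_general {X : Type u} [AddCommGroup X] [Lattice X]
    [CovariantClass X X (· + ·) (· ≤ ·)] [Module ℝ X]
    {Λ : Type*} (m : Λ → X → ℝ)
    (hadd : ∀ l (x y : X), m l (x + y) ≤ m l x + m l y)
    (hsmul : ∀ l (c : ℝ) (x : X), m l (c • x) = |c| * m l x)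
    (hmono : ∀ l (x y : X), |x| ≤ |y| → m l x ≤ m l y)
    (hsep : ∀ x : X, (∀ l, m l x = 0) → x = 0)
    (hcompact : ∀ A : Set X, (∀ l, ∃ M : ℝ, ∀ a ∈ A, m l a ≤ M) →
        @IsClosed X (umTop m) A → @IsCompact X (umTop m) A) :
    ∀ (α : Type u) [Preorder α] [Nonempty α] [IsDirected α (· ≤ ·)] (x : α → X),
      Monotone x → (∀ a, 0 ≤ x a) → (∀ l, ∃ M : ℝ, ∀ a, m l (x a) ≤ M) →
      ∃ s : X, IsLUB (Set.range x) s := by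
  intro α _ _ _ x hx _ hbdd
  let := umTop m
  have hbdd_closure : IsMBounded m (closure (Set.range x)) :=
    umTop.isMBounded_closure hadd hsmul hmono fun l ↦ by simpa using hbdd l
  have hmap_le : Tendsto x atTop (𝓟 (closure (Set.range x))) :=
    tendsto_principal.mpr <| .of_forall fun a ↦ subset_closure ⟨a, rfl⟩
  obtain ⟨s, -, hs⟩ := hcompact _ hbdd_closure isClosed_closure hmap_le
  exact ⟨s, umTop.isLUB_of_clusterPt hadd hsmul hsep hx hs⟩

/-- In an MNVL in which every m-bounded um-closed subset is um-compact,
`X` has the Levi property: every increasing m-bounded net in `X₊` has a supremum. -/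
theorem stmt19 {X : Type u} [AddCommGroup X] [Lattice X]
    [CovariantClass X X (· + ·) (· ≤ ·)] [Module ℝ X]
    {Λ : Type*} (m : Λ → X → ℝ)
    (hadd : ∀ l (x y : X), m l (x + y) ≤ m l x + m l y)
    (hsmul : ∀ l (c : ℝ) (x : X), m l (c • x) = |c| * m l x)
    (hmono : ∀ l (x y : X), |x| ≤ |y| → m l x ≤ m l y)
    (hsep : ∀ x : X, (∀ l, m l x = 0) → x = 0)
    (hdir : ∀ l₁ l₂, ∃ l₃, ∀ x : X, m l₁ x ≤ m l₃ x ∧ m l₂ x ≤ m l₃ x)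
    (hcompact : ∀ A : Set X, (∀ l, ∃ M : ℝ, ∀ a ∈ A, m l a ≤ M) →
        @IsClosed X (umTop m) A → @IsCompact X (umTop m) A) :
    ∀ (α : Type u) [Preorder α] [Nonempty α] [IsDirected α (· ≤ ·)] (x : α → X),
      Monotone x → (∀ a, 0 ≤ x a) → (∀ l, ∃ M : ℝ, ∀ a, m l (x a) ≤ M) →
      ∃ s : X, IsLUB (Set.range x) s :=
  stmt19_general m hadd hsmul hmono hsep hcompact
end
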